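/- arXiv:math/0606426 — 2 statements merged into one kernel-verified Lean document; each statement's English description precedes it below -/
import Mathlib

section
/- Let S be a convex set in ℝⁿ with 0 in its interior, let w ∈ ℝⁿ have nonnegative components, fix 0 < p ≤ 1, and define the weighted distance D(x) = Σᵢ wᵢ|xᵢ|ᵖ. If the minimum of D over the boundary ∂S is attained with value d > 0, then there exists a boundary point with exactly one nonzero component achieving weighted distance d. -/
/-!
Since `D (t • y) = |t|ᵖ D y`, every segment from `0` to a point with `D < d` stays off the
frontier, so `{D < d} ⊆ interior S` and `{D ≤ d} ⊆ closure S`. Let `x` be a minimiser, `aᵢ =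
wᵢ|xᵢ|ᵖ` and `I` the support of `a`. For `i ∈ I` the axis point `zᵢ = λᵢ⁻¹ xᵢ eᵢ` with
`λᵢ = (aᵢ/d)^{1/p}` has `D zᵢ = d`, and `∑ λᵢ ≤ ∑ aᵢ/d = 1` because `p ≤ 1`. If every `zᵢ` were
interior, then so would be `x_I = ∑ λᵢ zᵢ` (a subconvex combination, `0` being interior), hence
also `x`, the midpoint of `x_I` and of `2x - x_I`, which has `D = d` and so lies in `closure S`.
So some `zᵢ` lies on the frontier.
-/

open Set Finset Filter Topology

theorem IsPreconnected.inter_frontier_nonempty {α : Type*} [TopologicalSpace α] {s t : Set α}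
    (hs : IsPreconnected s) (hst : (s ∩ t).Nonempty) (hsdt : (s \ t).Nonempty) :
    (s ∩ frontier t).Nonempty := by
  by_contra h
  have hcover : s ⊆ interior t ∪ (closure t)ᶜ := fun a ha => by
    by_cases hi : a ∈ interior t
    · exact Or.inl hi
    · exact Or.inr fun hc => h ⟨a, ha, hc, hi⟩
  obtain ⟨a, has, hat⟩ := hst
  obtain ⟨b, hbs, hbt⟩ := hsdt
  have ha : a ∈ interior t := (hcover has).resolve_right (not_not.2 (subset_closure hat))
  have hb : b ∈ (closure t)ᶜ := (hcover hbs).resolve_left fun hb => hbt (interior_subset hb)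
  obtain ⟨c, -, hci, hcc⟩ :=
    hs _ _ isOpen_interior isClosed_closure.isOpen_compl hcover ⟨a, has, ha⟩ ⟨b, hbs, hb⟩
  exact hcc (interior_subset_closure hci)

theorem Convex.sum_smul_mem_of_zero_mem {E ι : Type*} [AddCommGroup E] [Module ℝ E] {K : Set E}
    (hK : Convex ℝ K) (h0 : (0 : E) ∈ K) {s : Finset ι} {c : ι → ℝ} {z : ι → E}
    (hc : ∀ i ∈ s, 0 ≤ c i) (hc1 : ∑ i ∈ s, c i ≤ 1) (hz : ∀ i ∈ s, z i ∈ K) :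
    ∑ i ∈ s, c i • z i ∈ K := by
  set t := ∑ i ∈ s, c i
  rcases (sum_nonneg hc).eq_or_lt with ht | ht
  · rw [sum_eq_zero fun i hi => by rw [(sum_eq_zero_iff_of_nonneg hc).1 ht.symm i hi, zero_smul]]
    exact h0
  · have hcomb : ∑ i ∈ s, (c i / t) • z i ∈ K :=
      hK.sum_mem (fun i hi => div_nonneg (hc i hi) ht.le) (by rw [← sum_div, div_self ht.ne'])
        hz
    convert hK.smul_mem_of_zero_mem h0 hcomb ⟨ht.le, hc1⟩ using 1
    rw [smul_sum]
    refine sum_congr rfl fun i _ => ?_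
    rw [smul_smul, mul_div_cancel₀ _ ht.ne']

section RealVectorSpace

variable {E : Type*} [AddCommGroup E] [Module ℝ E] [TopologicalSpace E]

theorem mem_interior_of_lt_of_forall_frontier_le [ContinuousSMul ℝ E] {S : Set E} {f : E → ℝ}
    {d : ℝ} {y : E} (h0 : (0 : E) ∈ interior S) (hmin : ∀ z ∈ frontier S, d ≤ f z)
    (hray : ∀ t ∈ Icc (0 : ℝ) 1, f (t • y) ≤ f y) (hy : f y < d) : y ∈ interior S := by
  by_contra hyS
  have hseg : IsPreconnected ((· • y) '' Icc (0 : ℝ) 1) :=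
    isPreconnected_Icc.image _ (continuous_id.smul continuous_const).continuousOn
  obtain ⟨_, ⟨t, ht, rfl⟩, hfr⟩ := hseg.inter_frontier_nonempty
    ⟨0, ⟨0, left_mem_Icc.2 zero_le_one, zero_smul ℝ y⟩, h0⟩
    ⟨y, ⟨1, right_mem_Icc.2 zero_le_one, one_smul ℝ y⟩, hyS⟩
  linarith [hmin _ (frontier_interior_subset hfr), hray t ht]

theorem mem_closure_of_forall_smul_mem [ContinuousSMul ℝ E] {S : Set E} {z : E}
    (h : ∀ u ∈ Ioo (0 : ℝ) 1, u • z ∈ S) : z ∈ closure S := by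
  have hlim : Tendsto (· • z) (𝓝[<] (1 : ℝ)) (𝓝 z) := by
    simpa using ((continuous_id.smul continuous_const : Continuous (· • z)).tendsto
      (1 : ℝ)).mono_left nhdsWithin_le_nhds
  exact mem_closure_of_tendsto hlim (eventually_of_mem (Ioo_mem_nhdsLT zero_lt_one) h)

theorem Convex.sub_notMem_interior_of_add_mem_closure [IsTopologicalAddGroup E]
    [ContinuousConstSMul ℝ E] {S : Set E} (hS : Convex ℝ S) {x v : E} (hx : x ∉ interior S)
    (hv : x + v ∈ closure S) : x - v ∉ interior S := fun h => hx <| by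
  convert hS.combo_interior_closure_mem_interior h hv (a := 1 / 2) (b := 1 / 2) (by norm_num)
    (by norm_num) (by norm_num) using 1
  module

end RealVectorSpace

theorem Finset.sum_rpow_inv_le_one {ι : Type*} {s : Finset ι} {a : ι → ℝ} {p : ℝ}
    (ha : ∀ i ∈ s, 0 ≤ a i) (hsum : ∑ i ∈ s, a i ≤ 1) (hp : 0 < p) (hp1 : p ≤ 1) :
    ∑ i ∈ s, a i ^ p⁻¹ ≤ 1 := by
  refine le_trans (sum_le_sum fun i hi => ?_) hsum
  have hai : a i ≤ 1 := (single_le_sum ha hi).trans hsum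
  simpa using
    Real.rpow_le_rpow_of_exponent_ge' (ha i hi) hai zero_le_one ((one_le_inv₀ hp).2 hp1)

theorem Pi.existsUnique_single_ne_zero {ι M : Type*} [DecidableEq ι] [Zero M] {i : ι} {b : M}
    (hb : b ≠ 0) : ∃! j, (Pi.single i b : ι → M) j ≠ 0 :=
  ⟨i, by simpa using hb, fun j hj => by_contra fun h => hj (by simp [h])⟩

noncomputable def weightedDist {ι : Type*} [Fintype ι] (w : ι → ℝ) (p : ℝ) (y : ι → ℝ) : ℝ :=
  ∑ i, w i * |y i| ^ p

section weightedDist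

variable {ι : Type*} [Fintype ι] {w : ι → ℝ} {p : ℝ}

theorem weightedDist_nonneg (hw : ∀ i, 0 ≤ w i) (y : ι → ℝ) : 0 ≤ weightedDist w p y :=
  sum_nonneg fun i _ => mul_nonneg (hw i) (Real.rpow_nonneg (abs_nonneg _) p)

theorem weightedDist_smul (c : ℝ) (y : ι → ℝ) :
    weightedDist w p (c • y) = |c| ^ p * weightedDist w p y := by
  simp only [weightedDist, mul_sum, Pi.smul_apply, smul_eq_mul, abs_mul,
    Real.mul_rpow (abs_nonneg c) (abs_nonneg _)]
  exact sum_congr rfl fun i _ => mul_left_comm _ _ _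

theorem weightedDist_single [DecidableEq ι] (hp : p ≠ 0) (i : ι) (a : ℝ) :
    weightedDist w p (Pi.single i a) = w i * |a| ^ p := by
  rw [weightedDist, Fintype.sum_eq_single i fun j hj => by simp [hj, Real.zero_rpow hp]]
  simp

end weightedDist

section Frontier

variable {ι : Type*} [Fintype ι] {S : Set (ι → ℝ)} {w : ι → ℝ} {p d : ℝ}

theorem mem_interior_of_weightedDist_lt (hw : ∀ i, 0 ≤ w i) (hp : 0 ≤ p)
    (h0 : (0 : ι → ℝ) ∈ interior S) (hmin : ∀ z ∈ frontier S, d ≤ weightedDist w p z)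
    {y : ι → ℝ} (hy : weightedDist w p y < d) : y ∈ interior S := by
  refine mem_interior_of_lt_of_forall_frontier_le h0 hmin (fun t ht => ?_) hy
  rw [weightedDist_smul, abs_of_nonneg ht.1]
  exact mul_le_of_le_one_left (weightedDist_nonneg hw y) (Real.rpow_le_one ht.1 ht.2 hp)

theorem mem_closure_of_weightedDist_le (hw : ∀ i, 0 ≤ w i) (hp : 0 < p) (hd : 0 < d)
    (h0 : (0 : ι → ℝ) ∈ interior S) (hmin : ∀ z ∈ frontier S, d ≤ weightedDist w p z)
    {z : ι → ℝ} (hz : weightedDist w p z ≤ d) : z ∈ closure S := by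
  refine mem_closure_of_forall_smul_mem fun u hu =>
    interior_subset <| mem_interior_of_weightedDist_lt hw hp.le h0 hmin ?_
  rw [weightedDist_smul, abs_of_pos hu.1]
  calc u ^ p * weightedDist w p z ≤ u ^ p * d :=
        mul_le_mul_of_nonneg_left hz (Real.rpow_nonneg hu.1.le p)
    _ < d := mul_lt_of_lt_one_left hd (Real.rpow_lt_one hu.1.le hu.2 hp)

theorem restrict_support_notMem_interior [DecidableEq ι] (hS : Convex ℝ S) (hw : ∀ i, 0 ≤ w i)
    (hp : 0 < p) (hd : 0 < d) (h0 : (0 : ι → ℝ) ∈ interior S)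
    (hmin : ∀ z ∈ frontier S, d ≤ weightedDist w p z) {x : ι → ℝ} (hx : x ∈ frontier S)
    (hxd : weightedDist w p x = d) {I : Finset ι} (hI : ∀ j ∉ I, w j * |x j| ^ p = 0) :
    (fun j => if j ∈ I then x j else 0) ∉ interior S := by
  set xI : ι → ℝ := fun j => if j ∈ I then x j else 0
  have hreflect : weightedDist w p (x + (x - xI)) = d := by
    rw [← hxd]
    refine sum_congr rfl fun j _ => ?_
    by_cases hj : j ∈ I
    · simp [xI, hj]
    · simp only [xI, hj, if_false, Pi.add_apply, Pi.sub_apply, sub_zero, ← two_mul, abs_mul,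
        Real.mul_rpow (abs_nonneg 2) (abs_nonneg (x j)), mul_left_comm (w j), hI j hj, mul_zero]
  simpa [sub_sub_cancel] using hS.sub_notMem_interior_of_add_mem_closure hx.2
    (mem_closure_of_weightedDist_le hw hp hd h0 hmin hreflect.le)

theorem exists_single_notMem_interior [DecidableEq ι] (hS : Convex ℝ S) (hw : ∀ i, 0 ≤ w i)
    (hp : 0 < p) (hp1 : p ≤ 1) (hd : 0 < d) (h0 : (0 : ι → ℝ) ∈ interior S)
    (hmin : ∀ z ∈ frontier S, d ≤ weightedDist w p z) {x : ι → ℝ} (hx : x ∈ frontier S)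
    (hxd : weightedDist w p x = d) :
    ∃ i, ∃ b ≠ 0, Pi.single i b ∉ interior S ∧ weightedDist w p (Pi.single i b) = d := by
  set a : ι → ℝ := fun i => w i * |x i| ^ p
  set I := univ.filter fun i => a i ≠ 0
  set lam : ι → ℝ := fun i => (a i / d) ^ p⁻¹
  have ha : ∀ i ∈ I, 0 < a i / d := fun i hi =>
    div_pos ((mul_nonneg (hw i) (Real.rpow_nonneg (abs_nonneg _) p)).lt_of_ne'
      (mem_filter.1 hi).2) hd
  have hlam : ∀ i ∈ I, 0 < lam i := fun i hi => Real.rpow_pos_of_pos (ha i hi) _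
  have hlam_sum : ∑ i ∈ I, lam i ≤ 1 := by
    refine sum_rpow_inv_le_one (fun i hi => (ha i hi).le) (le_of_eq ?_) hp hp1
    rw [← sum_div, sum_filter_ne_zero]
    exact (div_eq_one_iff_eq hd.ne').2 hxd
  have hdecomp : ∑ i ∈ I, lam i • (lam i)⁻¹ • Pi.single i (x i) =
      fun j => if j ∈ I then x j else 0 := by
    funext j
    rw [sum_congr rfl fun i hi => smul_inv_smul₀ (hlam i hi).ne' _, Finset.sum_apply]
    simp
  obtain ⟨i, hi, hZ⟩ : ∃ i ∈ I, (lam i)⁻¹ • Pi.single i (x i) ∉ interior S := by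
    by_contra! hall
    refine restrict_support_notMem_interior hS hw hp hd h0 hmin hx hxd (I := I)
      (fun j hj => not_not.1 fun h => hj (mem_filter.2 ⟨mem_univ j, h⟩)) ?_
    rw [← hdecomp]
    exact hS.interior.sum_smul_mem_of_zero_mem h0 (fun i hi => (hlam i hi).le) hlam_sum hall
  rw [← Pi.single_smul'] at hZ
  refine ⟨i, _, fun hb => hZ (by rw [hb, Pi.single_zero]; exact h0), hZ, ?_⟩
  rw [Pi.single_smul', weightedDist_smul, weightedDist_single hp.ne', abs_inv,
    abs_of_pos (hlam i hi), Real.inv_rpow (hlam i hi).le,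
    Real.rpow_inv_rpow (ha i hi).le hp.ne', inv_div]
  exact div_mul_cancel₀ d (mem_filter.1 hi).2

end Frontier

/-- Weighted version: for weights wᵢ ≥ 0 and 0 < p ≤ 1, the minimum of
D(x) = Σᵢ wᵢ|xᵢ|ᵖ over the boundary of a convex set with 0 interior is achieved
by a point with exactly one nonzero component. -/
theorem min_weighted_projection_unidimensional {n : ℕ} (S : Set (Fin n → ℝ))
    (hS : Convex ℝ S) (h0 : (0 : Fin n → ℝ) ∈ interior S)
    (w : Fin n → ℝ) (hw : ∀ i, 0 ≤ w i)
    (p : ℝ) (hp : 0 < p) (hp1 : p ≤ 1)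
    (d : ℝ) (hd : 0 < d)
    (x : Fin n → ℝ) (hx : x ∈ frontier S) (hxd : ∑ i, w i * |x i| ^ p = d)
    (hmin : ∀ y ∈ frontier S, d ≤ ∑ i, w i * |y i| ^ p) :
    ∃ z ∈ frontier S, (∃! i, z i ≠ 0) ∧ ∑ i, w i * |z i| ^ p = d := by
  obtain ⟨i, b, hb, hz, hzd⟩ := exists_single_notMem_interior hS hw hp hp1 hd h0 hmin hx hxd
  exact ⟨Pi.single i b, ⟨mem_closure_of_weightedDist_le hw hp hd h0 hmin hzd.le, hz⟩,
    Pi.existsUnique_single_ne_zero hb, hzd⟩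
end

section
/- Let S be a convex set in ℝⁿ with nonempty interior. Then the minimum L¹-distance from an interior point a to the frontier of S, d(a) = inf{‖x - a‖₁ : x ∈ frontier S}, satisfies d(a) = minⱼ min{ sup{t ≥ 0 : a + t eⱼ ∈ S}, sup{t ≥ 0 : a - t eⱼ ∈ S} }, provided S is bounded (so all suprema are finite and the infimum is attained). -/
/-!
The coordinate exit points `a ± exitDist • eⱼ` lie on the frontier at `ℓ¹`-distance equal to the
exit distance, so the minimum is attained. Conversely, if `r` is at most every coordinate exit
distance, convexity puts the whole open `ℓ¹` ball of radius `r` about `a` inside `S`: it is the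
convex hull of the open coordinate segments of radius `r`. That ball is open, so it misses the
frontier.
-/

open Set

noncomputable def exitDist {E : Type*} [AddCommGroup E] [Module ℝ E] (S : Set E) (a u : E) : ℝ :=
  sSup {t : ℝ | 0 ≤ t ∧ a + t • u ∈ S}

section ExitDist

variable {E : Type*} [AddCommGroup E] [Module ℝ E] {S : Set E} {a u : E}

theorem exitDist_neg (S : Set E) (a u : E) :
    exitDist S a (-u) = sSup {t : ℝ | 0 ≤ t ∧ a - t • u ∈ S} := by
  simp only [exitDist, smul_neg, sub_eq_add_neg]

theorem add_smul_mem_of_lt_exitDist (hS : Convex ℝ S) (ha : a ∈ S) {t : ℝ} (ht : 0 ≤ t)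
    (hlt : t < exitDist S a u) : a + t • u ∈ S := by
  obtain ⟨t', ⟨-, ht'S⟩, htt'⟩ := exists_lt_of_lt_csSup (s := {t : ℝ | 0 ≤ t ∧ a + t • u ∈ S})
    ⟨0, le_rfl, by simpa using ha⟩ hlt
  have ht' : 0 < t' := ht.trans_lt htt'
  have h := hS.add_smul_mem ha ht'S ⟨div_nonneg ht ht'.le, (div_le_one ht').2 htt'.le⟩
  rwa [smul_smul, div_mul_cancel₀ t ht'.ne'] at h

end ExitDist

section Normed

variable {E : Type*} [NormedAddCommGroup E] [NormedSpace ℝ E] {S : Set E} {a u : E}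

theorem bddAbove_exitTimes (hbdd : Bornology.IsBounded S) (hu : u ≠ 0) :
    BddAbove {t : ℝ | 0 ≤ t ∧ a + t • u ∈ S} := by
  obtain ⟨R, hR⟩ := isBounded_iff_forall_norm_le.mp hbdd
  refine ⟨(R + ‖a‖) / ‖u‖, fun t ⟨ht, htS⟩ => (le_div_iff₀ (norm_pos_iff.2 hu)).2 ?_⟩
  calc t * ‖u‖ = ‖(a + t • u) - a‖ := by
        rw [add_sub_cancel_left, norm_smul, Real.norm_of_nonneg ht]
    _ ≤ ‖a + t • u‖ + ‖a‖ := norm_sub_le _ _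
    _ ≤ R + ‖a‖ := by linarith [hR _ htS]

theorem exitDist_nonneg (hbdd : Bornology.IsBounded S) (ha : a ∈ S) (hu : u ≠ 0) :
    0 ≤ exitDist S a u :=
  le_csSup (bddAbove_exitTimes hbdd hu) ⟨le_rfl, by simpa using ha⟩

theorem add_exitDist_smul_mem_frontier (hbdd : Bornology.IsBounded S) (ha : a ∈ S) (hu : u ≠ 0) :
    a + exitDist S a u • u ∈ frontier S := by
  set T := {t : ℝ | 0 ≤ t ∧ a + t • u ∈ S}
  have hT : T.Nonempty := ⟨0, le_rfl, by simpa using ha⟩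
  have hline : Continuous fun t : ℝ => a + t • u := by fun_prop
  refine ⟨map_mem_closure (f := fun t : ℝ => a + t • u) hline
    ((isLUB_csSup hT (bddAbove_exitTimes hbdd hu)).mem_closure hT) fun t ht => ht.2,
    fun hint => ?_⟩
  -- points of the ray slightly beyond the exit point still lie in the open set `interior S`
  have hnear : ∀ᶠ t in nhdsWithin (exitDist S a u) (Ioi (exitDist S a u)),
      a + t • u ∈ interior S :=
    nhdsWithin_le_nhds ((isOpen_interior.preimage hline).mem_nhds hint)
  obtain ⟨t, htS, hgt⟩ := (hnear.and self_mem_nhdsWithin).exists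
  have hle : t ≤ exitDist S a u := le_csSup (bddAbove_exitTimes hbdd hu)
    ⟨(exitDist_nonneg hbdd ha hu).trans hgt.le, interior_subset htS⟩
  exact hle.not_gt hgt

end Normed

noncomputable def coordExitDist {ι : Type*} [DecidableEq ι] (S : Set (ι → ℝ)) (a : ι → ℝ) (j : ι) :
    ℝ :=
  min (exitDist S a (Pi.single j 1)) (exitDist S a (-Pi.single j 1))

section Coordinates

variable {ι : Type*} [DecidableEq ι] {S : Set (ι → ℝ)} {a : ι → ℝ}

theorem add_single_mem_of_abs_lt_coordExitDist (hS : Convex ℝ S) (ha : a ∈ S) {j : ι} {s : ℝ}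
    (hs : |s| < coordExitDist S a j) : a + Pi.single j s ∈ S := by
  rcases le_total 0 s with h | h
  · have hmem := add_smul_mem_of_lt_exitDist hS ha h
      (((le_abs_self s).trans_lt hs).trans_le (min_le_left _ _))
    rwa [← Pi.single_smul, smul_eq_mul, mul_one] at hmem
  · have hmem := add_smul_mem_of_lt_exitDist hS ha (neg_nonneg.2 h)
      (((neg_le_abs s).trans_lt hs).trans_le (min_le_right _ _))
    rwa [smul_neg, ← Pi.single_smul, smul_eq_mul, mul_one, ← Pi.single_neg, neg_neg] at hmem

variable [Fintype ι] {r : ℝ}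

theorem sum_abs_add_single_sub (a : ι → ℝ) (j : ι) (s : ℝ) :
    ∑ k, |(a + Pi.single j s : ι → ℝ) k - a k| = |s| := by
  rw [Finset.sum_eq_single j (fun k _ hk => by simp [hk]) (by simp)]
  simp

-- `y` is a convex combination of the points `a ± ‖y - a‖₁ • eⱼ`, with weights `|yⱼ - aⱼ| / ‖y - a‖₁`.
theorem setOf_sum_abs_sub_lt_subset (hS : Convex ℝ S) (ha : a ∈ S)
    (hseg : ∀ j (s : ℝ), |s| < r → a + Pi.single j s ∈ S) :
    {y | ∑ j, |y j - a j| < r} ⊆ S := by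
  intro y hy
  set t := ∑ j, |y j - a j|
  rcases (Finset.sum_nonneg fun j _ => abs_nonneg (y j - a j)).eq_or_lt with ht | ht
  · have hya : y = a := funext fun j => sub_eq_zero.1 <| abs_eq_zero.1 <|
      (Finset.sum_eq_zero_iff_of_nonneg fun j _ => abs_nonneg _).1 ht.symm j (Finset.mem_univ j)
    rwa [hya]
  have hweights : ∑ j, |y j - a j| / t = 1 := by rw [← Finset.sum_div, div_self ht.ne']
  have hcomb : ∑ j, (|y j - a j| / t) • (a + Pi.single j (t * SignType.sign (y j - a j))) = y := by
    have hterm : ∀ j, (|y j - a j| / t) • (a + Pi.single j (t * SignType.sign (y j - a j)))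
        = (|y j - a j| / t) • a + Pi.single j (y j - a j) := by
      intro j
      rw [smul_add, ← Pi.single_smul, smul_eq_mul, ← mul_assoc, div_mul_cancel₀ _ ht.ne',
        abs_mul_sign]
    simp only [hterm, Finset.sum_add_distrib, ← Finset.sum_smul, hweights, one_smul]
    rw [Finset.univ_sum_single (fun j => y j - a j)]
    exact add_sub_cancel a y
  rw [← hcomb]
  refine hS.sum_mem (fun j _ => by positivity) hweights fun j _ => hseg j _ ?_
  calc |t * SignType.sign (y j - a j)| ≤ t := by
        rw [abs_mul, abs_of_pos ht]
        refine mul_le_of_le_one_right ht.le ?_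
        rcases lt_trichotomy (y j - a j) 0 with h | h | h <;> simp [h]
    _ < r := hy

theorem le_sum_abs_sub_of_mem_frontier (hS : Convex ℝ S) (ha : a ∈ S)
    (hseg : ∀ j (s : ℝ), |s| < r → a + Pi.single j s ∈ S) {x : ι → ℝ} (hx : x ∈ frontier S) :
    r ≤ ∑ j, |x j - a j| := by
  by_contra! hlt
  exact hx.2 (interior_maximal (setOf_sum_abs_sub_lt_subset hS ha hseg)
    (isOpen_lt (by fun_prop) continuous_const) hlt)

theorem exists_mem_frontier_coordExitDist_eq_sum_abs_sub (hbdd : Bornology.IsBounded S)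
    (ha : a ∈ S) (j : ι) : ∃ x ∈ frontier S, coordExitDist S a j = ∑ k, |x k - a k| := by
  have hj : (Pi.single j 1 : ι → ℝ) ≠ 0 := by simp
  rcases min_choice (exitDist S a (Pi.single j 1)) (exitDist S a (-Pi.single j 1)) with h | h <;>
    rw [coordExitDist, h]
  · refine ⟨_, add_exitDist_smul_mem_frontier hbdd ha hj, ?_⟩
    rw [← Pi.single_smul, smul_eq_mul, mul_one, sum_abs_add_single_sub,
      abs_of_nonneg (exitDist_nonneg hbdd ha hj)]
  · have hd := exitDist_nonneg hbdd ha (neg_ne_zero.2 hj)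
    refine ⟨_, add_exitDist_smul_mem_frontier hbdd ha (neg_ne_zero.2 hj), ?_⟩
    set d := exitDist S a (-Pi.single j 1)
    rw [smul_neg, ← Pi.single_smul, smul_eq_mul, mul_one, ← Pi.single_neg,
      sum_abs_add_single_sub, abs_neg, abs_of_nonneg hd]

end Coordinates

/-- For a bounded convex S and a ∈ interior S, the minimum L¹-distance from a to
the frontier equals the smallest one-dimensional exit distance along the
coordinate directions. -/
theorem min_L1_dist_coordinate_exits {n : ℕ} [NeZero n]
    (S : Set (Fin n → ℝ)) (hS : Convex ℝ S) (hbdd : Bornology.IsBounded S)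
    (a : Fin n → ℝ) (ha : a ∈ interior S) :
    IsLeast {r : ℝ | ∃ x ∈ frontier S, r = ∑ j, |x j - a j|}
      (⨅ j : Fin n,
        min (sSup {t : ℝ | 0 ≤ t ∧ a + t • (Pi.single j 1 : Fin n → ℝ) ∈ S})
            (sSup {t : ℝ | 0 ≤ t ∧ a - t • (Pi.single j 1 : Fin n → ℝ) ∈ S})) := by
  simp only [← exitDist_neg]
  change IsLeast _ (⨅ j, coordExitDist S a j)
  have haS : a ∈ S := interior_subset ha
  obtain ⟨j₀, hj₀⟩ := exists_eq_ciInf_of_finite (f := coordExitDist S a)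
  rw [← hj₀]
  refine ⟨exists_mem_frontier_coordExitDist_eq_sum_abs_sub hbdd haS j₀, ?_⟩
  rintro _ ⟨x, hx, rfl⟩
  refine le_sum_abs_sub_of_mem_frontier hS haS (fun j s hs => ?_) hx
  refine add_single_mem_of_abs_lt_coordExitDist hS haS (hs.trans_le ?_)
  exact hj₀ ▸ ciInf_le (Finite.bddBelow_range _) j
end
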